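/- arXiv:1908.06682 — 5 statements merged into one kernel-verified Lean document; each statement's English description precedes it below -/
import Mathlib

section
/- For every ε > 0 and every positive integer q, the number of matrices γ ∈ SL₂(ℤ) with γ ≡ I mod q and all entries of absolute value at most T is O_ε(T^ε (T²/q³ + T/q + 1)). -/
/-!
Write `γ = !![a, b; c, d]`. The congruence `γ ≡ 1 [q]` and `a * d - b * c = 1` force
`a + d ≡ 2 [q²]`, because `a + d - 2 = b * c - (a - 1) * (d - 1)`. Hence there are
`O(T / q + 1)` choices for `a` and then `O(T / q² + 1)` for `d`. Once `(a, d)` is fixed with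
`a * d ≠ 1`, the pair `(b, c)` is a factorisation of `a * d - 1`, so there are `O_ε(T ^ ε)`
choices by the divisor bound `τ(n) = O_ε(n ^ ε)`. If `a * d = 1` then `a = d = ±1` and `b * c = 0`,
which leaves only `O(T / q + 1)` matrices.
-/

open Finset
open scoped MatrixGroups

lemma natCast_add_one_le_mul_pow {y : ℝ} (hy : 1 < y) (k : ℕ) :
    (k + 1 : ℝ) ≤ max 1 (y - 1)⁻¹ * y ^ k := by
  have hK : 1 ≤ max 1 (y - 1)⁻¹ := le_max_left _ _
  have hKc : 1 ≤ max 1 (y - 1)⁻¹ * (y - 1) := by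
    calc (1 : ℝ) = (y - 1)⁻¹ * (y - 1) := (inv_mul_cancel₀ (by linarith)).symm
      _ ≤ _ := mul_le_mul_of_nonneg_right (le_max_right _ _) (by linarith)
  have bernoulli : 1 + k * (y - 1) ≤ y ^ k := by
    simpa using one_add_mul_le_pow (a := y - 1) (by linarith) k
  calc (k + 1 : ℝ) ≤ max 1 (y - 1)⁻¹ * (1 + k * (y - 1)) := by
        nlinarith [(k.cast_nonneg : (0 : ℝ) ≤ k)]
    _ ≤ _ := by gcongr

theorem Nat.exists_card_divisors_le_mul_rpow {ε : ℝ} (hε : 0 < ε) :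
    ∃ C : ℝ, ∀ n : ℕ, n ≠ 0 → (#n.divisors : ℝ) ≤ C * n ^ ε := by
  set g : ℕ → ℝ := fun p => max 1 ((p : ℝ) ^ ε - 1)⁻¹
  set N := ⌈(2 : ℝ) ^ ε⁻¹⌉₊
  have hg : ∀ p, 1 ≤ g p := fun p => le_max_left _ _
  have hg_large : ∀ p, N ≤ p → g p = 1 := by
    intro p hp
    have h2 : 2 ≤ (p : ℝ) ^ ε := by
      calc (2 : ℝ) = ((2 : ℝ) ^ ε⁻¹) ^ ε := by
            rw [← Real.rpow_mul (by norm_num), inv_mul_cancel₀ hε.ne', Real.rpow_one]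
        _ ≤ (p : ℝ) ^ ε := by
            gcongr
            exact (Nat.le_ceil _).trans (by exact_mod_cast hp)
    exact max_eq_left (inv_le_one_of_one_le₀ (by linarith))
  refine ⟨∏ p ∈ range N, g p, fun n hn => ?_⟩
  have hfactor : ∀ p ∈ n.primeFactors,
      ((n.factorization p + 1 : ℕ) : ℝ) ≤ g p * ((p : ℝ) ^ ε) ^ n.factorization p := by
    intro p hp
    have hp1 : (1 : ℝ) < p := by exact_mod_cast (prime_of_mem_primeFactors hp).one_lt
    exact_mod_cast natCast_add_one_le_mul_pow (Real.one_lt_rpow hp1 hε) _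
  have hn_rpow : ∏ p ∈ n.primeFactors, ((p : ℝ) ^ ε) ^ n.factorization p = (n : ℝ) ^ ε := by
    conv_rhs => rw [prod_primeFactors_pow_factorization hn]
    push_cast
    rw [← Real.finsetProd_rpow _ _ fun p _ => by positivity]
    refine prod_congr rfl fun p _ => ?_
    rw [Real.rpow_pow_comm (by positivity)]
  have hsmall : ∏ p ∈ n.primeFactors, g p ≤ ∏ p ∈ range N, g p := by
    rw [← prod_filter_of_ne (p := (· < N)) fun p _ hp => by
      by_contra h; exact hp (hg_large p (not_lt.mp h))]
    exact prod_le_prod_of_subset_of_one_le (fun p hp => mem_range.mpr (mem_filter.mp hp).2)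
      (fun p _ => zero_le_one.trans (hg p)) fun p _ _ => hg p
  calc (#n.divisors : ℝ) = ∏ p ∈ n.primeFactors, ((n.factorization p + 1 : ℕ) : ℝ) := by
        rw [card_divisors hn]; push_cast; rfl
    _ ≤ ∏ p ∈ n.primeFactors, g p * ((p : ℝ) ^ ε) ^ n.factorization p :=
        prod_le_prod (fun _ _ => by positivity) hfactor
    _ = (∏ p ∈ n.primeFactors, g p) * (n : ℝ) ^ ε := by rw [prod_mul_distrib, hn_rpow]
    _ ≤ (∏ p ∈ range N, g p) * (n : ℝ) ^ ε := by gcongr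

lemma Int.card_divisorsAntidiag (z : ℤ) : #z.divisorsAntidiag = 2 * #z.natAbs.divisors := by
  rcases z with n | n <;>
    rw [divisorsAntidiag, card_disjUnion, card_map, card_map, ← Nat.map_div_right_divisors,
      card_map, two_mul] <;> rfl

lemma Int.card_Icc_filter_dvd_sub_le {a b : ℤ} (hab : a ≤ b + 1) (v : ℤ) {r : ℤ} (hr : 0 < r) :
    (#{x ∈ Icc a b | r ∣ x - v} : ℝ) ≤ (b - a + 1) / r + 1 := by
  have hset : {x ∈ Icc a b | r ∣ x - v} = {x ∈ Ico a (b + 1) | x ≡ v [ZMOD r]} := by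
    ext x
    rw [mem_filter, mem_filter, mem_Ico, mem_Icc, Int.lt_add_one_iff, Int.modEq_comm,
      Int.modEq_iff_dvd]
  have hr' : (0 : ℚ) < r := by exact_mod_cast hr
  have hcount : (#{x ∈ Icc a b | r ∣ x - v} : ℚ) ≤ ((b : ℚ) - a + 1) / r + 1 := by
    rw [hset, ← Int.cast_natCast, Int.Ico_filter_modEq_card _ _ hr, Int.cast_max, Int.cast_zero]
    have hlen : (0 : ℚ) ≤ b - a + 1 := by exact_mod_cast (by omega : 0 ≤ b - a + 1)
    refine max_le ?_ (by linarith [div_nonneg hlen hr'.le])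
    push_cast
    have hsplit : ((b : ℚ) + 1 - v) / r - ((a : ℚ) - v) / r = ((b : ℚ) - a + 1) / r := by ring
    linarith [Int.ceil_lt_add_one (((b : ℚ) + 1 - v) / r), Int.le_ceil (((a : ℚ) - v) / r)]
  exact_mod_cast (Rat.cast_le (K := ℝ)).mpr hcount

lemma Int.card_Icc_neg_filter_dvd_sub_le {M : ℤ} (hM : 0 ≤ M) (v : ℤ) {r : ℤ} (hr : 0 < r) :
    (#{x ∈ Icc (-M) M | r ∣ x - v} : ℝ) ≤ (2 * M + 1) / r + 1 := by
  have := Int.card_Icc_filter_dvd_sub_le (by omega : -M ≤ M + 1) v hr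
  rwa [Int.cast_neg, sub_neg_eq_add, ← two_mul] at this

lemma sq_dvd_add_sub_two {R : Type*} [CommRing R] {q a b c d : R} (ha : q ∣ a - 1)
    (hd : q ∣ d - 1) (hb : q ∣ b) (hc : q ∣ c) (hdet : a * d - b * c = 1) : q ^ 2 ∣ a + d - 2 := by
  have key : a + d - 2 = b * c - (a - 1) * (d - 1) := by linear_combination hdet
  rw [key, sq]
  exact dvd_sub (mul_dvd_mul hb hc) (mul_dvd_mul ha hd)

noncomputable def levelDiagonals (q : ℕ) (M : ℤ) : Finset ((_ : ℤ) × ℤ) :=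
  {a ∈ Icc (-M) M | (q : ℤ) ∣ a - 1}.sigma fun a => {d ∈ Icc (-M) M | (q : ℤ) ^ 2 ∣ d - (2 - a)}

noncomputable def levelOffDiagonals (q : ℕ) (M n : ℤ) : Finset (ℤ × ℤ) :=
  {p ∈ Icc (-M) M ×ˢ Icc (-M) M | (q : ℤ) ∣ p.1 ∧ (q : ℤ) ∣ p.2 ∧ p.1 * p.2 = n}

noncomputable def levelEntries (q : ℕ) (M : ℤ) : Finset ((_ : (_ : ℤ) × ℤ) × ℤ × ℤ) :=
  (levelDiagonals q M).sigma fun x => levelOffDiagonals q M (x.1 * x.2 - 1)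

-- The diagonal `(a, d)` comes first because the admissible off-diagonals `(b, c)` depend on it.
def sl2Entries (γ : SL(2, ℤ)) : (_ : (_ : ℤ) × ℤ) × ℤ × ℤ := ⟨⟨γ 0 0, γ 1 1⟩, γ 0 1, γ 1 0⟩

lemma sl2Entries_injective : Function.Injective sl2Entries := by
  intro γ δ h
  simp only [sl2Entries, Sigma.mk.injEq, Prod.mk.injEq, heq_eq_eq] at h
  ext i j
  fin_cases i <;> fin_cases j <;> simp [h]

lemma sl2Entries_mem_levelEntries {q : ℕ} {M : ℤ} {γ : SL(2, ℤ)}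
    (hq : ∀ i j, (q : ℤ) ∣ ((γ : Matrix (Fin 2) (Fin 2) ℤ) - 1) i j)
    (hM : ∀ i j, γ i j ∈ Icc (-M) M) : sl2Entries γ ∈ levelEntries q M := by
  have hdet : γ 0 0 * γ 1 1 - γ 0 1 * γ 1 0 = 1 := by
    rw [← Matrix.det_fin_two]; exact γ.2
  have h00 := hq 0 0
  have h11 := hq 1 1
  have h01 := hq 0 1
  have h10 := hq 1 0
  simp only [Matrix.sub_apply, Matrix.one_apply_eq, Matrix.one_apply_ne zero_ne_one,
    Matrix.one_apply_ne one_ne_zero, sub_zero] at h00 h11 h01 h10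
  have htrace := sq_dvd_add_sub_two h00 h11 h01 h10 hdet
  simp only [levelEntries, levelDiagonals, levelOffDiagonals, sl2Entries, mem_sigma, mem_filter,
    mem_product]
  refine ⟨⟨⟨hM 0 0, h00⟩, hM 1 1, ?_⟩, ⟨hM 0 1, hM 1 0⟩, h01, h10, by linear_combination -hdet⟩
  rwa [sub_sub_eq_add_sub, add_comm (γ 1 1)]

lemma card_levelOffDiagonals_le {n : ℤ} (hn : n ≠ 0) (q : ℕ) (M : ℤ) :
    #(levelOffDiagonals q M n) ≤ 2 * #n.natAbs.divisors := by
  rw [← Int.card_divisorsAntidiag]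
  refine card_le_card fun p hp => ?_
  rw [Int.mem_divisorsAntidiag]
  exact ⟨(mem_filter.mp hp).2.2.2, hn⟩

lemma card_levelOffDiagonals_zero_le {q : ℕ} (hq : 0 < q) {M : ℤ} (hM : 0 ≤ M) :
    (#(levelOffDiagonals q M 0) : ℝ) ≤ 2 * ((2 * M + 1) / q + 1) := by
  set E := {x ∈ Icc (-M) M | (q : ℤ) ∣ x - 0}
  have hE : (#E : ℝ) ≤ (2 * M + 1) / q + 1 := by
    exact_mod_cast Int.card_Icc_neg_filter_dvd_sub_le hM 0 (r := q) (by exact_mod_cast hq)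
  have hsub : levelOffDiagonals q M 0 ⊆ E ×ˢ {0} ∪ {0} ×ˢ E := by
    rintro ⟨b, c⟩ hp
    simp only [levelOffDiagonals, mem_filter, mem_product] at hp
    obtain ⟨⟨hb, hc⟩, hqb, hqc, hbc⟩ := hp
    rcases mul_eq_zero.mp hbc with rfl | rfl
    · exact mem_union_right _ <|
        mem_product.mpr ⟨mem_singleton_self _, mem_filter.mpr ⟨hc, by simpa⟩⟩
    · exact mem_union_left _ <|
        mem_product.mpr ⟨mem_filter.mpr ⟨hb, by simpa⟩, mem_singleton_self _⟩
  have hcard : #(levelOffDiagonals q M 0) ≤ #E + #E :=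
    (card_le_card hsub).trans ((card_union_le _ _).trans (by simp))
  calc (#(levelOffDiagonals q M 0) : ℝ) ≤ #E + #E := by exact_mod_cast hcard
    _ ≤ _ := by linarith

lemma card_levelDiagonals_le {q : ℕ} (hq : 0 < q) {M : ℤ} (hM : 0 ≤ M) :
    (#(levelDiagonals q M) : ℝ) ≤ ((2 * M + 1) / q + 1) * ((2 * M + 1) / q ^ 2 + 1) := by
  have hq' : (0 : ℤ) < q := by exact_mod_cast hq
  rw [levelDiagonals, card_sigma, Nat.cast_sum]
  calc ∑ a ∈ {a ∈ Icc (-M) M | (q : ℤ) ∣ a - 1}, (#{d ∈ Icc (-M) M | (q : ℤ) ^ 2 ∣ d - (2 - a)} : ℝ)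
      ≤ ∑ a ∈ {a ∈ Icc (-M) M | (q : ℤ) ∣ a - 1}, ((2 * M + 1) / q ^ 2 + 1 : ℝ) :=
        sum_le_sum fun a _ => by
          exact_mod_cast Int.card_Icc_neg_filter_dvd_sub_le hM (2 - a) (pow_pos hq' 2)
    _ = #{a ∈ Icc (-M) M | (q : ℤ) ∣ a - 1} * ((2 * M + 1) / q ^ 2 + 1 : ℝ) := by
        rw [sum_const, nsmul_eq_mul]
    _ ≤ _ := by
        gcongr
        exact_mod_cast Int.card_Icc_neg_filter_dvd_sub_le hM 1 hq'

lemma card_filter_levelDiagonals_mul_eq_one_le (q : ℕ) (M : ℤ) :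
    #{x ∈ levelDiagonals q M | x.1 * x.2 = 1} ≤ 2 := by
  refine (card_le_card fun x hx => ?_).trans (card_le_two (a := ⟨1, 1⟩) (b := ⟨-1, -1⟩))
  obtain ⟨a, d⟩ := x
  rcases Int.mul_eq_one_iff_eq_one_or_neg_one.mp (mem_filter.mp hx).2 with ⟨rfl, rfl⟩ | ⟨rfl, rfl⟩
    <;> simp

lemma card_levelEntries_le {q : ℕ} (hq : 0 < q) {M : ℤ} (hM : 0 ≤ M) {D : ℝ} (hD0 : 0 ≤ D)
    (hD : ∀ x ∈ levelDiagonals q M, x.1 * x.2 ≠ 1 →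
      (#(levelOffDiagonals q M (x.1 * x.2 - 1)) : ℝ) ≤ D) :
    (#(levelEntries q M) : ℝ) ≤ #(levelDiagonals q M) * D + 4 * ((2 * M + 1) / q + 1) := by
  rw [levelEntries, card_sigma, Nat.cast_sum,
    ← sum_filter_add_sum_filter_not _ fun x => x.1 * x.2 = 1]
  have hdegenerate : ∑ x ∈ levelDiagonals q M with x.1 * x.2 = 1,
      (#(levelOffDiagonals q M (x.1 * x.2 - 1)) : ℝ) ≤ 4 * ((2 * M + 1) / q + 1) :=
    calc _ ≤ ∑ x ∈ levelDiagonals q M with x.1 * x.2 = 1, 2 * ((2 * M + 1) / q + 1 : ℝ) :=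
          sum_le_sum fun x hx => by
            rw [(mem_filter.mp hx).2, sub_self]
            exact card_levelOffDiagonals_zero_le hq hM
      _ = #{x ∈ levelDiagonals q M | x.1 * x.2 = 1} * (2 * ((2 * M + 1) / q + 1 : ℝ)) := by
          rw [sum_const, nsmul_eq_mul]
      _ ≤ 2 * (2 * ((2 * M + 1) / q + 1 : ℝ)) := by
          gcongr
          exact_mod_cast card_filter_levelDiagonals_mul_eq_one_le q M
      _ = _ := by ring
  have hgeneric : ∑ x ∈ levelDiagonals q M with ¬x.1 * x.2 = 1,
      (#(levelOffDiagonals q M (x.1 * x.2 - 1)) : ℝ) ≤ #(levelDiagonals q M) * D :=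
    calc _ ≤ ∑ x ∈ levelDiagonals q M with ¬x.1 * x.2 = 1, D :=
          sum_le_sum fun x hx => hD x (mem_filter.mp hx).1 (mem_filter.mp hx).2
      _ = #{x ∈ levelDiagonals q M | ¬x.1 * x.2 = 1} * D := by rw [sum_const, nsmul_eq_mul]
      _ ≤ _ := by
          gcongr
          exact filter_subset _ _
  linarith

lemma card_levelOffDiagonals_le_rpow {ε C : ℝ} (hε : 0 ≤ ε)
    (hC : ∀ n : ℕ, n ≠ 0 → (#n.divisors : ℝ) ≤ C * n ^ (ε / 2)) (q : ℕ) (M : ℤ) {T : ℝ}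
    (hT : 1 ≤ T) {a d : ℤ} (ha : |(a : ℝ)| ≤ T) (hd : |(d : ℝ)| ≤ T) (had : a * d ≠ 1) :
    (#(levelOffDiagonals q M (a * d - 1)) : ℝ) ≤ 2 * C * (2 * T) ^ ε := by
  have hn : a * d - 1 ≠ 0 := sub_ne_zero.mpr had
  have hdiv := hC (a * d - 1).natAbs (Int.natAbs_ne_zero.mpr hn)
  rw [Nat.cast_natAbs, Int.cast_abs] at hdiv
  have hprod : |(a : ℝ) * d| ≤ T * T := by
    rw [abs_mul]; exact mul_le_mul ha hd (abs_nonneg _) (by linarith)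
  have hsize : |((a * d - 1 : ℤ) : ℝ)| ≤ (2 * T) ^ 2 := by
    push_cast
    calc |(a : ℝ) * d - 1| ≤ |(a : ℝ) * d| + 1 := (abs_sub _ _).trans_eq (by rw [abs_one])
      _ ≤ (2 * T) ^ 2 := by nlinarith
  have hpow : |((a * d - 1 : ℤ) : ℝ)| ^ (ε / 2) ≤ (2 * T) ^ ε := by
    calc _ ≤ ((2 * T) ^ 2) ^ (ε / 2) := by gcongr
      _ = (2 * T) ^ ε := by
        rw [← Real.rpow_natCast_mul (by linarith)]; congr 1; push_cast; ring
  have hC0 : 0 ≤ C := zero_le_one.trans (by simpa using hC 1 one_ne_zero)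
  calc (#(levelOffDiagonals q M (a * d - 1)) : ℝ) ≤ 2 * #(a * d - 1).natAbs.divisors := by
        exact_mod_cast card_levelOffDiagonals_le hn q M
    _ ≤ 2 * (C * |((a * d - 1 : ℤ) : ℝ)| ^ (ε / 2)) := by gcongr
    _ ≤ 2 * C * (2 * T) ^ ε := by rw [← mul_assoc]; gcongr

lemma two_mul_add_one_div_add_one_le {M T r : ℝ} (hT : 1 ≤ T) (hM : M ≤ T) (hr : 0 < r) :
    (2 * M + 1) / r + 1 ≤ 3 * (T / r + 1) := by
  have : (2 * M + 1) / r ≤ 3 * T / r := by gcongr; linarith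
  linarith [mul_div_assoc 3 T r]

lemma div_add_one_mul_div_sq_add_one_le {q T : ℝ} (hq : 1 ≤ q) (hT : 0 ≤ T) :
    (T / q + 1) * (T / q ^ 2 + 1) ≤ 2 * (T ^ 2 / q ^ 3 + T / q + 1) := by
  have hq0 : 0 < q := by linarith
  have hsq : T / q ^ 2 ≤ T / q := by gcongr; nlinarith
  have hcube : T / q * (T / q ^ 2) = T ^ 2 / q ^ 3 := by field_simp
  have : 0 ≤ T ^ 2 / q ^ 3 := by positivity
  have : 0 ≤ T / q := by positivity
  nlinarith

lemma card_levelEntries_floor_le {ε C : ℝ} (hε : 0 ≤ ε)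
    (hC : ∀ n : ℕ, n ≠ 0 → (#n.divisors : ℝ) ≤ C * n ^ (ε / 2)) {q : ℕ} (hq : 0 < q) {T : ℝ}
    (hT : 1 ≤ T) :
    (#(levelEntries q ⌊T⌋) : ℝ) ≤ (36 * C * 2 ^ ε + 12) * T ^ ε * (T ^ 2 / q ^ 3 + T / q + 1) := by
  set M := ⌊T⌋
  set X := T ^ 2 / q ^ 3 + T / q + 1
  have hM0 : 0 ≤ M := Int.floor_nonneg.mpr (by linarith)
  have hMT : (M : ℝ) ≤ T := Int.floor_le T
  have hq1 : (1 : ℝ) ≤ q := by exact_mod_cast hq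
  have hC0 : 0 ≤ C := zero_le_one.trans (by simpa using hC 1 one_ne_zero)
  have habs : ∀ x ∈ Icc (-M) M, |(x : ℝ)| ≤ T := fun x hx => by
    rw [← Int.cast_abs]; exact (Int.cast_le.mpr (abs_le.mpr (mem_Icc.mp hx))).trans hMT
  have hD : ∀ x ∈ levelDiagonals q M, x.1 * x.2 ≠ 1 →
      (#(levelOffDiagonals q M (x.1 * x.2 - 1)) : ℝ) ≤ 2 * C * (2 * T) ^ ε := fun x hx hx1 =>
    card_levelOffDiagonals_le_rpow hε hC q M hT (habs _ (mem_filter.mp (mem_sigma.mp hx).1).1)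
      (habs _ (mem_filter.mp (mem_sigma.mp hx).2).1) hx1
  have hu : (2 * M + 1) / q + 1 ≤ 3 * (T / q + 1) :=
    two_mul_add_one_div_add_one_le hT hMT (by positivity)
  have hdiag : (#(levelDiagonals q M) : ℝ) ≤ 18 * X :=
    calc _ ≤ ((2 * M + 1 : ℝ) / q + 1) * ((2 * M + 1) / q ^ 2 + 1) := card_levelDiagonals_le hq hM0
      _ ≤ (3 * (T / q + 1)) * (3 * (T / q ^ 2 + 1)) := by
        gcongr
        exact two_mul_add_one_div_add_one_le hT hMT (by positivity)
      _ ≤ 18 * X := by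
        nlinarith [div_add_one_mul_div_sq_add_one_le hq1 (by linarith : (0 : ℝ) ≤ T)]
  have hTε : 1 ≤ T ^ ε := Real.one_le_rpow hT hε
  have hX : 0 ≤ X := by positivity
  calc (#(levelEntries q M) : ℝ)
      ≤ #(levelDiagonals q M) * (2 * C * (2 * T) ^ ε) + 4 * ((2 * M + 1) / q + 1) :=
        card_levelEntries_le hq hM0 (by positivity) hD
    _ ≤ 18 * X * (2 * C * (2 ^ ε * T ^ ε)) + 4 * (3 * X) := by
        rw [Real.mul_rpow (by norm_num) (by linarith)]
        gcongr
        have : 0 ≤ T ^ 2 / q ^ 3 := by positivity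
        linarith
    _ ≤ (36 * C * 2 ^ ε + 12) * T ^ ε * X := by nlinarith

def levelBall (q : ℕ) (T : ℝ) : Set SL(2, ℤ) :=
  {γ | (∀ i j, (q : ℤ) ∣ ((γ : Matrix (Fin 2) (Fin 2) ℤ) - 1) i j) ∧
    (∀ i j, (|(γ : Matrix (Fin 2) (Fin 2) ℤ) i j| : ℝ) ≤ T)}

lemma levelBall_finite_and_ncard_le (q : ℕ) (T : ℝ) :
    (levelBall q T).Finite ∧ (levelBall q T).ncard ≤ #(levelEntries q ⌊T⌋) := by
  have hmaps : ∀ γ ∈ levelBall q T, sl2Entries γ ∈ levelEntries q ⌊T⌋ := fun γ hγ =>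
    sl2Entries_mem_levelEntries hγ.1 fun i j =>
      mem_Icc.mpr (abs_le.mp (Int.le_floor.mpr (by exact_mod_cast hγ.2 i j)))
  exact ⟨Set.Finite.of_injOn hmaps sl2Entries_injective.injOn (finite_toSet _),
    (Set.ncard_le_ncard_of_injOn _ hmaps sl2Entries_injective.injOn (finite_toSet _)).trans_eq
      (Set.ncard_coe_finset _)⟩

/-- For every ε > 0 and every positive integer q, the number of matrices
γ ∈ SL₂(ℤ) with γ ≡ I mod q and all entries of absolute value at most T is
O_ε(T^ε (T²/q³ + T/q + 1)). -/
theorem stmt0 :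
    ∀ ε : ℝ, 0 < ε → ∃ C : ℝ, 0 < C ∧ ∀ q : ℕ, 0 < q → ∀ T : ℝ, 1 ≤ T →
      (Set.Finite {γ : Matrix.SpecialLinearGroup (Fin 2) ℤ |
          (∀ i j, (q : ℤ) ∣ ((γ : Matrix (Fin 2) (Fin 2) ℤ) - 1) i j) ∧
          (∀ i j, (|(γ : Matrix (Fin 2) (Fin 2) ℤ) i j| : ℝ) ≤ T)}) ∧
      ((Set.ncard {γ : Matrix.SpecialLinearGroup (Fin 2) ℤ |
          (∀ i j, (q : ℤ) ∣ ((γ : Matrix (Fin 2) (Fin 2) ℤ) - 1) i j) ∧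
          (∀ i j, (|(γ : Matrix (Fin 2) (Fin 2) ℤ) i j| : ℝ) ≤ T)} : ℝ)
        ≤ C * T ^ ε * (T ^ 2 / (q : ℝ) ^ 3 + T / (q : ℝ) + 1)) := by
  intro ε hε
  obtain ⟨C, hC⟩ := Nat.exists_card_divisors_le_mul_rpow (half_pos hε)
  have hC1 : 1 ≤ C := by simpa using hC 1 one_ne_zero
  refine ⟨36 * C * 2 ^ ε + 12, by positivity, fun q hq T hT => ?_⟩
  obtain ⟨hfinite, hncard⟩ := levelBall_finite_and_ncard_le q T
  exact ⟨hfinite, (Nat.cast_le.mpr hncard).trans (card_levelEntries_floor_le hε.le hC hq hT)⟩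
end

section
/- If γ ∈ SL₂(ℤ) satisfies γ ≡ I mod q, then the trace of γ is congruent to 2 modulo q². -/
/-- If γ ∈ SL₂(ℤ) satisfies γ ≡ I mod q, then tr γ ≡ 2 mod q². -/
theorem stmt1 (q : ℤ) (γ : Matrix.SpecialLinearGroup (Fin 2) ℤ)
    (h : ∀ i j, q ∣ ((γ : Matrix (Fin 2) (Fin 2) ℤ) - 1) i j) :
    q ^ 2 ∣ Matrix.trace (γ : Matrix (Fin 2) (Fin 2) ℤ) - 2 := by
  have hdet : (γ : Matrix (Fin 2) (Fin 2) ℤ).det = 1 := γ.2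
  rw [Matrix.det_fin_two] at hdet
  have h00 := h 0 0
  have h01 := h 0 1
  have h10 := h 1 0
  have h11 := h 1 1
  simp [Matrix.sub_apply, Matrix.one_apply] at h00 h01 h10 h11
  rw [Matrix.trace_fin_two]
  have key : (γ : Matrix (Fin 2) (Fin 2) ℤ) 0 0 + (γ : Matrix (Fin 2) (Fin 2) ℤ) 1 1 - 2 =
      (γ : Matrix (Fin 2) (Fin 2) ℤ) 0 1 * (γ : Matrix (Fin 2) (Fin 2) ℤ) 1 0 -
      ((γ : Matrix (Fin 2) (Fin 2) ℤ) 0 0 - 1) * ((γ : Matrix (Fin 2) (Fin 2) ℤ) 1 1 - 1) := by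
    linear_combination hdet
  rw [key, pow_two]
  exact dvd_sub (mul_dvd_mul h01 h10) (mul_dvd_mul h00 h11)
end

section
/- If γ ∈ SL₃(ℤ) satisfies γ ≡ I mod q, then tr γ ≡ tr γ⁻¹ ≡ 3 mod q² and tr γ ≡ tr γ⁻¹ mod q³. -/
/-- If γ ∈ SL₃(ℤ) satisfies γ ≡ I mod q, then
tr γ ≡ tr γ⁻¹ ≡ 3 mod q² and tr γ ≡ tr γ⁻¹ mod q³. -/
theorem stmt3 (q : ℤ) (γ : Matrix.SpecialLinearGroup (Fin 3) ℤ)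
    (h : ∀ i j, q ∣ ((γ : Matrix (Fin 3) (Fin 3) ℤ) - 1) i j) :
    q ^ 2 ∣ Matrix.trace (γ : Matrix (Fin 3) (Fin 3) ℤ) - 3 ∧
    q ^ 2 ∣ Matrix.trace (γ⁻¹ : Matrix (Fin 3) (Fin 3) ℤ) - 3 ∧
    q ^ 3 ∣ Matrix.trace (γ : Matrix (Fin 3) (Fin 3) ℤ) -
      Matrix.trace (γ⁻¹ : Matrix (Fin 3) (Fin 3) ℤ) := by
  set A : Matrix (Fin 3) (Fin 3) ℤ := (γ : Matrix (Fin 3) (Fin 3) ℤ) with hA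
  have e : ∀ i j, ∃ b, A i j = (if i = j then 1 else 0) + q * b := by
    intro i j
    obtain ⟨b, hb⟩ := h i j
    refine ⟨b, ?_⟩
    simp only [Matrix.sub_apply, Matrix.one_apply, ← hA] at hb
    linarith
  choose b hb using e
  have h00 : A 0 0 = 1 + q * b 0 0 := by simpa using hb 0 0
  have h11 : A 1 1 = 1 + q * b 1 1 := by simpa using hb 1 1
  have h22 : A 2 2 = 1 + q * b 2 2 := by simpa using hb 2 2
  have h01 : A 0 1 = q * b 0 1 := by simpa using hb 0 1
  have h02 : A 0 2 = q * b 0 2 := by simpa using hb 0 2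
  have h10 : A 1 0 = q * b 1 0 := by simpa using hb 1 0
  have h12 : A 1 2 = q * b 1 2 := by simpa using hb 1 2
  have h20 : A 2 0 = q * b 2 0 := by simpa using hb 2 0
  have h21 : A 2 1 = q * b 2 1 := by simpa using hb 2 1
  have hdet : A.det = 1 := γ.2
  have hinv : A⁻¹ = A.adjugate := by
    rw [Matrix.inv_def, hdet]; simp
  rw [Matrix.det_fin_three, h00, h01, h02, h10, h11, h12, h20, h21, h22] at hdet
  set E2 : ℤ := b 0 0 * b 1 1 + b 0 0 * b 2 2 + b 1 1 * b 2 2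
      - b 0 1 * b 1 0 - b 0 2 * b 2 0 - b 1 2 * b 2 1 with hE2
  set D : ℤ := b 0 0 * b 1 1 * b 2 2 - b 0 0 * b 1 2 * b 2 1 - b 0 1 * b 1 0 * b 2 2
      + b 0 1 * b 1 2 * b 2 0 + b 0 2 * b 1 0 * b 2 1 - b 0 2 * b 1 1 * b 2 0 with hD
  refine ⟨⟨-(E2 + q * D), ?_⟩, ⟨-(E2 + 2 * q * D), ?_⟩, ⟨D, ?_⟩⟩
  · rw [Matrix.trace_fin_three, h00, h11, h22, hE2, hD]
    linear_combination hdet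
  · rw [hinv, Matrix.adjugate_fin_three, Matrix.trace_fin_three]
    simp only [Matrix.cons_val_zero, Matrix.cons_val_one, Matrix.head_cons, Matrix.cons_val_two,
      Matrix.tail_cons, Matrix.of_apply, Matrix.cons_val']
    rw [h00, h01, h02, h10, h11, h12, h20, h21, h22, hE2, hD]
    linear_combination 2 * hdet
  · rw [hinv, Matrix.adjugate_fin_three, Matrix.trace_fin_three, Matrix.trace_fin_three]
    simp only [Matrix.cons_val_zero, Matrix.cons_val_one, Matrix.head_cons, Matrix.cons_val_two,
      Matrix.tail_cons, Matrix.of_apply, Matrix.cons_val']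
    rw [ h00, h01, h02, h10, h11, h12, h20, h21, h22, hD]
    linear_combination -hdet
end

section
/- Let A be a 3×3 integer matrix with det A = 1, and let α ∈ ℤ be such that the 3×3 matrix A − αI reduced mod q has rank at most 1 over 𝔽_q (q prime). Then α² · tr A − α · tr A⁻¹ ≡ α³ − 1 mod q². -/
/-!
Put `B = A - αI`. Since `det A = 1`, expanding the characteristic polynomial gives
`det B = 1 - α tr A⁻¹ + α² tr A - α³`, so it suffices to show `q² ∣ det B`. A matrix of rank
at most one is an outer product `u vᵀ`, whose `2 × 2` minors vanish, so `q` divides every entry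
of `adj B`. Then `q³ ∣ det (adj B) = (det B)²`, which forces `q² ∣ det B`.
-/

open Matrix

theorem Matrix.exists_eq_vecMulVec_of_rank_le_one {K m n : Type*} [Field K] [Fintype n]
    [DecidableEq n] (M : Matrix m n K) (h : M.rank ≤ 1) : ∃ u v, M = vecMulVec u v := by
  rw [Matrix.rank] at h
  obtain ⟨⟨u, _⟩, hu⟩ := finrank_le_one_iff.mp h
  choose c hc using fun j => hu ⟨M *ᵥ Pi.single j 1, Pi.single j 1, rfl⟩
  refine ⟨u, c, Matrix.ext fun i j => ?_⟩
  have hcol := congrArg (fun w : LinearMap.range M.mulVecLin => (w : m → K) i) (hc j)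
  simp only [SetLike.val_smul, Pi.smul_apply, smul_eq_mul, mulVec_single_one] at hcol
  simpa [vecMulVec_apply, mul_comm] using hcol.symm

theorem Matrix.adjugate_vecMulVec_fin_three {R : Type*} [CommRing R] (u v : Fin 3 → R) :
    (vecMulVec u v).adjugate = 0 := by
  ext i j
  fin_cases i <;> fin_cases j <;> simp [adjugate_fin_three, vecMulVec_apply] <;> ring

theorem Int.sq_dvd_of_pow_succ_dvd_pow {p : ℕ} (hp : p.Prime) {k : ℕ} {a : ℤ}
    (h : (p : ℤ) ^ (k + 1) ∣ a ^ k) : (p : ℤ) ^ 2 ∣ a := by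
  rcases eq_or_ne a 0 with rfl | ha
  · exact dvd_zero _
  rw [← Int.natAbs_dvd_natAbs] at h ⊢
  simp only [Int.natAbs_pow, Int.natAbs_natCast] at h ⊢
  have ha' : a.natAbs ≠ 0 := Int.natAbs_ne_zero.mpr ha
  rw [hp.pow_dvd_iff_le_factorization (pow_ne_zero _ ha'), Nat.factorization_pow] at h
  rw [hp.pow_dvd_iff_le_factorization ha']
  simp only [Finsupp.smul_apply, smul_eq_mul] at h
  nlinarith

theorem Matrix.sq_dvd_det_of_dvd_adjugate {n : Type*} [Fintype n] [DecidableEq n] [Nonempty n]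
    {p : ℕ} (hp : p.Prime) (B : Matrix n n ℤ) (h : ∀ i j, (p : ℤ) ∣ B.adjugate i j) :
    (p : ℤ) ^ 2 ∣ B.det := by
  choose C hC using h
  have hadj : B.adjugate = (p : ℤ) • Matrix.of C := by ext i j; simp [hC]
  have hpow : (p : ℤ) ^ Fintype.card n ∣ B.det ^ (Fintype.card n - 1) := by
    rw [← det_adjugate, hadj, det_smul]
    exact dvd_mul_right _ _
  obtain ⟨k, hk⟩ : ∃ k, Fintype.card n = k + 1 :=
    ⟨_, (Nat.succ_pred_eq_of_pos Fintype.card_pos).symm⟩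
  rw [hk, Nat.add_sub_cancel] at hpow
  exact Int.sq_dvd_of_pow_succ_dvd_pow hp hpow

theorem Matrix.det_sub_smul_one_fin_three {R : Type*} [CommRing R] (A : Matrix (Fin 3) (Fin 3) R)
    (x : R) : (A - x • 1).det = A.det - x * A.adjugate.trace + x ^ 2 * A.trace - x ^ 3 := by
  simp [det_fin_three, adjugate_fin_three, trace_fin_three]
  ring

/-- Let A be a 3×3 integer matrix with det A = 1, and α ∈ ℤ such that A − αI
reduced mod q has rank at most 1 over 𝔽_q (q prime). Then
α² tr A − α tr A⁻¹ ≡ α³ − 1 mod q². -/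
theorem stmt7 (q : ℕ) (hq : q.Prime) (A : Matrix (Fin 3) (Fin 3) ℤ) (hA : A.det = 1)
    (α : ℤ)
    (hrank : Matrix.rank ((A - α • (1 : Matrix (Fin 3) (Fin 3) ℤ)).map
      (Int.cast : ℤ → ZMod q)) ≤ 1) :
    ((q : ℤ)) ^ 2 ∣ α ^ 2 * Matrix.trace A - α * Matrix.trace A⁻¹ - (α ^ 3 - 1) := by
  have : Fact q.Prime := ⟨hq⟩
  set B := A - α • (1 : Matrix (Fin 3) (Fin 3) ℤ)
  have hadj : (B.map (Int.cast : ℤ → ZMod q)).adjugate = 0 := by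
    obtain ⟨u, v, huv⟩ := exists_eq_vecMulVec_of_rank_le_one _ hrank
    rw [huv, adjugate_vecMulVec_fin_three]
  have hdvd (i j) : (q : ℤ) ∣ B.adjugate i j := by
    rw [← ZMod.intCast_zmod_eq_zero_iff_dvd]
    simpa [hadj] using congrFun (congrFun ((Int.castRingHom (ZMod q)).map_adjugate B) i) j
  have hinv : A⁻¹ = A.adjugate := by simp [inv_def, hA]
  have hdet : B.det = α ^ 2 * A.trace - α * A⁻¹.trace - (α ^ 3 - 1) := by
    rw [det_sub_smul_one_fin_three, hA, hinv]
    ring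
  exact hdet ▸ sq_dvd_det_of_dvd_adjugate hq B hdvd
end

section
/- Let q be prime and q > 3. The number of triples (x, y, α) with x, y ∈ ℤ, |x| ≤ S, |y| ≤ R, α ∈ 𝔽_q satisfying x ≡ α + 2α⁻² mod q, y ≡ α⁻¹ + 2α² mod q, and α²x − αy ≡ α³ − 1 mod q² (for any lift of α to ℤ) is O((S/q + 1)(R/q + 1) + q). -/
lemma count_residue (n : ℕ) (hn : 0 < n) (c : ℤ) (B : ℝ) (hB : 0 ≤ B) :
    ∃ T : Finset ℤ, (∀ x : ℤ, (|x| : ℝ) ≤ B → (n : ℤ) ∣ x - c → x ∈ T) ∧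
      ((T.card : ℝ) ≤ 2 * B / n + 1) := by
  have hn' : (0:ℝ) < n := by exact_mod_cast hn
  refine ⟨(Finset.Icc ⌈(-B - c)/n⌉ ⌊(B - c)/n⌋).image (fun k => c + n * k), ?_, ?_⟩
  · intro x hx hdvd
    obtain ⟨k, hk⟩ := hdvd
    have hxk : x = c + n * k := by omega
    refine Finset.mem_image.mpr ⟨k, Finset.mem_Icc.mpr ⟨?_, ?_⟩, hxk.symm⟩
    · rw [Int.ceil_le]
      have h1 : -B ≤ (x : ℝ) := by
        have := abs_le.mp (by exact_mod_cast hx : |(x:ℝ)| ≤ B)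
        linarith [this.1]
      have hx' : (x : ℝ) = c + n * k := by exact_mod_cast congrArg (Int.cast : ℤ → ℝ) hxk
      rw [div_le_iff₀ hn']; nlinarith
    · rw [Int.le_floor]
      have h2 : (x : ℝ) ≤ B := by
        have := abs_le.mp (by exact_mod_cast hx : |(x:ℝ)| ≤ B)
        exact this.2
      have hx' : (x : ℝ) = c + n * k := by exact_mod_cast congrArg (Int.cast : ℤ → ℝ) hxk
      rw [le_div_iff₀ hn']; nlinarith
  · calc ((Finset.image (fun k => c + n * k) (Finset.Icc ⌈(-B - c)/n⌉ ⌊(B - c)/n⌋)).card : ℝ)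
        ≤ ((Finset.Icc ⌈(-B - c)/n⌉ ⌊(B - c)/n⌋).card : ℝ) := by
          exact_mod_cast Finset.card_image_le
      _ ≤ 2 * B / n + 1 := by
          rw [Int.card_Icc]
          have h1 : (⌊(B - c)/n⌋ : ℝ) ≤ (B - c)/n := Int.floor_le _
          have h2 : (-B - c)/n ≤ (⌈(-B - c)/n⌉ : ℝ) := Int.le_ceil _
          have h4 : ((⌊(B - c)/n⌋ + 1 - ⌈(-B - c)/n⌉ : ℤ) : ℝ) ≤ 2 * B / n + 1 := by
            push_cast
            have : (B - c)/n - (-B - c)/n = 2 * B / n := by field_simp; ring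
            linarith
          have h5 : (0:ℝ) ≤ 2 * B / n + 1 := by positivity
          have h3 : ((Int.toNat (⌊(B - c)/n⌋ + 1 - ⌈(-B - c)/n⌉) : ℤ) : ℝ)
              = max ((⌊(B - c)/n⌋ + 1 - ⌈(-B - c)/n⌉ : ℤ) : ℝ) 0 := by
            rw [Int.toNat_eq_max]; push_cast; rfl
          calc ((Int.toNat (⌊(B - c)/n⌋ + 1 - ⌈(-B - c)/n⌉) : ℝ))
              = max ((⌊(B - c)/n⌋ + 1 - ⌈(-B - c)/n⌉ : ℤ) : ℝ) 0 := by exact_mod_cast h3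
            _ ≤ 2 * B / n + 1 := max_le h4 h5

lemma cube_root_key (q : ℕ) (hq : q.Prime) (hq3 : 3 < q) (α : ZMod q) (hα : α ≠ 0)
    (x y : ℤ)
    (hx : (x : ZMod q) = α + 2 * α⁻¹ ^ 2)
    (hy : (y : ZMod q) = α⁻¹ + 2 * α ^ 2)
    (hd : (q : ℤ) ^ 2 ∣ (α.val : ℤ) ^ 2 * x - (α.val : ℤ) * y - ((α.val : ℤ) ^ 3 - 1)) :
    α ^ 3 = 1 := by
  haveI : Fact q.Prime := ⟨hq⟩
  have hdq : (q : ℤ) ∣ (α.val : ℤ) ^ 2 * x - (α.val : ℤ) * y - ((α.val : ℤ) ^ 3 - 1) :=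
    dvd_trans (dvd_pow_self _ two_ne_zero) hd
  have h0 : (((α.val : ℤ) ^ 2 * x - (α.val : ℤ) * y - ((α.val : ℤ) ^ 3 - 1) : ℤ) : ZMod q) = 0 :=
    (ZMod.intCast_zmod_eq_zero_iff_dvd _ q).mpr hdq
  have hv : ((α.val : ℤ) : ZMod q) = α := by
    push_cast
    simp [ZMod.natCast_val, ZMod.cast_id]
  push_cast at h0
  rw [show ((α.val : ℕ) : ZMod q) = α by simpa using hv] at h0
  rw [hx, hy] at h0
  have h2 : (2 : ZMod q) * (1 - α ^ 3) = 0 := by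
    have hinv : α * α⁻¹ = 1 := mul_inv_cancel₀ hα
    field_simp at h0 ⊢
    linear_combination h0
  have h2ne : (2 : ZMod q) ≠ 0 := by
    intro h
    have : (q : ℤ) ∣ 2 := (ZMod.intCast_zmod_eq_zero_iff_dvd 2 q).mp (by exact_mod_cast h)
    have := Int.le_of_dvd (by norm_num) this
    omega
  rcases mul_eq_zero.mp h2 with h | h
  · exact absurd h h2ne
  · linear_combination -h

/-- The number of triples (x, y, α), x y ∈ ℤ, |x| ≤ S, |y| ≤ R, α ∈ 𝔽_q^×,
with x ≡ α + 2α⁻² mod q, y ≡ α⁻¹ + 2α² mod q, α²x − αy ≡ α³ − 1 mod q²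
(via a lift of α), is O((S/q + 1)(R/q + 1) + q), uniformly over primes q > 3
and S, R ≥ 1. -/
theorem stmt10 :
    ∃ C : ℝ, 0 < C ∧ ∀ q : ℕ, q.Prime → 3 < q → ∀ S R : ℝ, 1 ≤ S → 1 ≤ R →
      (Set.Finite {p : ℤ × ℤ × ZMod q | p.2.2 ≠ 0 ∧
          (|p.1| : ℝ) ≤ S ∧ (|p.2.1| : ℝ) ≤ R ∧
          ((p.1 : ZMod q) = p.2.2 + 2 * p.2.2⁻¹ ^ 2) ∧
          ((p.2.1 : ZMod q) = p.2.2⁻¹ + 2 * p.2.2 ^ 2) ∧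
          ((q : ℤ) ^ 2 ∣ (p.2.2.val : ℤ) ^ 2 * p.1 - (p.2.2.val : ℤ) * p.2.1 -
            ((p.2.2.val : ℤ) ^ 3 - 1))}) ∧
      ((Set.ncard {p : ℤ × ℤ × ZMod q | p.2.2 ≠ 0 ∧
          (|p.1| : ℝ) ≤ S ∧ (|p.2.1| : ℝ) ≤ R ∧
          ((p.1 : ZMod q) = p.2.2 + 2 * p.2.2⁻¹ ^ 2) ∧
          ((p.2.1 : ZMod q) = p.2.2⁻¹ + 2 * p.2.2 ^ 2) ∧
          ((q : ℤ) ^ 2 ∣ (p.2.2.val : ℤ) ^ 2 * p.1 - (p.2.2.val : ℤ) * p.2.1 -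
            ((p.2.2.val : ℤ) ^ 3 - 1))} : ℝ)
        ≤ C * ((S / q + 1) * (R / q + 1) + q)) := by
  refine ⟨12, by norm_num, ?_⟩
  intro q hq hq3 S R hS hR
  haveI : Fact q.Prime := ⟨hq⟩
  have hq0 : 0 < q := hq.pos
  have hS0 : (0:ℝ) ≤ S := by linarith
  have hR0 : (0:ℝ) ≤ R := by linarith
  set A := {p : ℤ × ℤ × ZMod q | p.2.2 ≠ 0 ∧
          (|p.1| : ℝ) ≤ S ∧ (|p.2.1| : ℝ) ≤ R ∧
          ((p.1 : ZMod q) = p.2.2 + 2 * p.2.2⁻¹ ^ 2) ∧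
          ((p.2.1 : ZMod q) = p.2.2⁻¹ + 2 * p.2.2 ^ 2) ∧
          ((q : ℤ) ^ 2 ∣ (p.2.2.val : ℤ) ^ 2 * p.1 - (p.2.2.val : ℤ) * p.2.1 -
            ((p.2.2.val : ℤ) ^ 3 - 1))} with hA
  -- per-α boxes
  choose Tx hTxMem hTxCard using fun α : ZMod q =>
    count_residue q hq0 (((α + 2 * α⁻¹ ^ 2).val : ℤ)) S hS0
  choose Ty hTyMem hTyCard using fun α : ZMod q =>
    count_residue q hq0 (((α⁻¹ + 2 * α ^ 2).val : ℤ)) R hR0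
  set Fq : Finset (ZMod q) := Finset.univ.filter (fun α => α ^ 3 = 1) with hFq
  set T : Finset (ℤ × ℤ × ZMod q) :=
    Fq.biUnion (fun α => (Tx α) ×ˢ (Ty α) ×ˢ ({α} : Finset (ZMod q))) with hT
  have hvq : ∀ β : ZMod q, ((β.val : ℤ) : ZMod q) = β := by
    intro β; push_cast; simp [ZMod.natCast_val, ZMod.cast_id]
  have hsub : A ⊆ ↑T := by
    rintro ⟨x, y, α⟩ ⟨hα, hxS, hyR, hx, hy, hd⟩
    have hcube : α ^ 3 = 1 := cube_root_key q hq hq3 α hα x y hx hy hd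
    rw [Finset.mem_coe, hT, Finset.mem_biUnion]
    refine ⟨α, by simp [hFq, hcube], ?_⟩
    rw [Finset.mem_product]
    refine ⟨hTxMem α x hxS ?_, ?_⟩
    · rw [← ZMod.intCast_zmod_eq_zero_iff_dvd]
      push_cast
      rw [hx]
      simp [ZMod.natCast_val, ZMod.cast_id]
    · rw [Finset.mem_product]
      refine ⟨hTyMem α y hyR ?_, by simp⟩
      rw [← ZMod.intCast_zmod_eq_zero_iff_dvd]
      push_cast
      rw [hy]
      simp [ZMod.natCast_val, ZMod.cast_id]
  constructor
  · exact Set.Finite.subset T.finite_toSet hsub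
  · have hcard : A.ncard ≤ T.card := by
      have := Set.ncard_le_ncard hsub T.finite_toSet
      simpa using this
    have hFq3 : Fq.card ≤ 3 := by
      have hsub' : Fq ⊆ (Polynomial.nthRoots 3 (1 : ZMod q)).toFinset := by
        intro α hα
        rw [Multiset.mem_toFinset, Polynomial.mem_nthRoots (by norm_num : 0 < 3)]
        simpa [hFq] using hα
      calc Fq.card ≤ (Polynomial.nthRoots 3 (1 : ZMod q)).toFinset.card :=
            Finset.card_le_card hsub'
        _ ≤ Multiset.card (Polynomial.nthRoots 3 (1 : ZMod q)) := Multiset.toFinset_card_le _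
        _ ≤ 3 := Polynomial.card_nthRoots 3 1
    have hq0' : (0:ℝ) < q := by exact_mod_cast hq0
    have hbox : ∀ α ∈ Fq, (((Tx α) ×ˢ (Ty α) ×ˢ ({α} : Finset (ZMod q))).card : ℝ)
        ≤ (2 * S / q + 1) * (2 * R / q + 1) := by
      intro α _
      rw [Finset.card_product, Finset.card_product, Finset.card_singleton]
      push_cast
      have h1 := hTxCard α
      have h2 := hTyCard α
      have hx0 : (0:ℝ) ≤ (Tx α).card := by positivity
      have hy0 : (0:ℝ) ≤ (Ty α).card := by positivity
      nlinarith [mul_le_mul h1 h2 hy0 (by positivity : (0:ℝ) ≤ 2 * S / q + 1)]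
    have hTcard : (T.card : ℝ) ≤ 3 * ((2 * S / q + 1) * (2 * R / q + 1)) := by
      calc (T.card : ℝ) ≤ ((Fq.sum fun α => ((Tx α) ×ˢ (Ty α) ×ˢ ({α} : Finset (ZMod q))).card : ℕ) : ℝ) := by
            exact_mod_cast Finset.card_biUnion_le
        _ = Fq.sum fun α => (((Tx α) ×ˢ (Ty α) ×ˢ ({α} : Finset (ZMod q))).card : ℝ) := by push_cast; rfl
        _ ≤ Fq.sum fun _ => (2 * S / q + 1) * (2 * R / q + 1) := Finset.sum_le_sum hbox
        _ = Fq.card * ((2 * S / q + 1) * (2 * R / q + 1)) := by rw [Finset.sum_const]; ring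
        _ ≤ 3 * ((2 * S / q + 1) * (2 * R / q + 1)) := by
            have : (Fq.card : ℝ) ≤ 3 := by exact_mod_cast hFq3
            have hpos : (0:ℝ) ≤ (2 * S / q + 1) * (2 * R / q + 1) := by positivity
            nlinarith
    have hfinal : (3:ℝ) * ((2 * S / q + 1) * (2 * R / q + 1))
        ≤ 12 * ((S / q + 1) * (R / q + 1) + q) := by
      have h1 : (0:ℝ) ≤ S / q := by positivity
      have h2 : (0:ℝ) ≤ R / q := by positivity
      have h3 : 2 * S / q = 2 * (S / q) := by ring
      have h4 : 2 * R / q = 2 * (R / q) := by ring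
      rw [h3, h4]
      nlinarith [mul_nonneg h1 h2]
    calc (A.ncard : ℝ) ≤ (T.card : ℝ) := by exact_mod_cast hcard
      _ ≤ 3 * ((2 * S / q + 1) * (2 * R / q + 1)) := hTcard
      _ ≤ 12 * ((S / q + 1) * (R / q + 1) + q) := hfinal
end
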